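/- arXiv:2006.07176 — 3 statements merged into one kernel-verified Lean document; each statement's English description precedes it below -/
import Mathlib

section
/- Let H ⊆ J ⊆ GL_n(F_q) be subgroups, q a power of the prime p. Define Ψ(X) = exp(2πi·Tr_{F_q/F_p}(Trace(X))/p) for X ∈ GL_n(F_q), and for a finite-dimensional complex representation ρ of a subgroup H define W_H(ρ) = (1/dim ρ) · Σ_{X∈H} χ_ρ(X)Ψ(X). Then for any finite-dimensional complex representation σ of H, W_H(σ) = W_J(Ind_H^J σ). -/
/- STATEMENT 0: induction invariance of the Kondo–Gauss sum W_H(σ) for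
   subgroups H ≤ J ≤ GL_n(F_q), with the induced character given by the
   standard induced character formula. -/

open Matrix

attribute [local instance] Classical.propDecidable

/-- The additive measure `Ψ(X) = exp(2πi·Tr_{F_q/F_p}(Trace X)/p)`. -/
noncomputable def Psi (p : ℕ) (F : Type) [Field F] [Fintype F] [Algebra (ZMod p) F]
    (n : ℕ) (X : GL (Fin n) F) : ℂ :=
  Complex.exp (2 * Real.pi * Complex.I *
    ((Algebra.trace (ZMod p) F (Matrix.trace (X : Matrix (Fin n) (Fin n) F))).val : ℂ) / p)

/-- `W_H(ρ) = (1/dim ρ) Σ_{X ∈ H} χ_ρ(X) Ψ(X)`. -/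
noncomputable def W (p : ℕ) (F : Type) [Field F] [Fintype F] [Algebra (ZMod p) F]
    (n : ℕ) (H : Subgroup (GL (Fin n) F)) {V : Type} [AddCommGroup V] [Module ℂ V]
    (ρ : Representation ℂ H V) : ℂ :=
  (1 / (Module.finrank ℂ V : ℂ)) *
    ∑ X : H, LinearMap.trace ℂ V (ρ X) * Psi p F n (X : GL (Fin n) F)

lemma Psi_conj (p : ℕ) (F : Type) [Field F] [Fintype F] [Algebra (ZMod p) F]
    (n : ℕ) (g x : GL (Fin n) F) : Psi p F n (g * x * g⁻¹) = Psi p F n x := by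
  have : Matrix.trace ((g * x * g⁻¹ : GL (Fin n) F) : Matrix (Fin n) (Fin n) F)
      = Matrix.trace (x : Matrix (Fin n) (Fin n) F) := by
    rw [Units.val_mul, Units.val_mul, Matrix.trace_mul_comm, ← mul_assoc,
      ← Units.val_mul, inv_mul_cancel, Units.val_one, one_mul]
  unfold Psi
  rw [this]

set_option maxHeartbeats 1000000 in
theorem stmt0 (p : ℕ) [Fact p.Prime] (F : Type) [Field F] [Fintype F] [Algebra (ZMod p) F]
    (n : ℕ) (H J : Subgroup (GL (Fin n) F)) (hHJ : H ≤ J)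
    {V : Type} [AddCommGroup V] [Module ℂ V] [FiniteDimensional ℂ V]
    (σ : Representation ℂ H V) :
    -- `W_J(Ind_H^J σ)`, written via the standard induced character formula and the
    -- dimension `[J:H]·dim σ` of the induced representation ...
    (1 / (((Nat.card J : ℂ) / (Nat.card H : ℂ)) * (Module.finrank ℂ V : ℂ))) *
      ∑ X : J,
        ((1 / (Nat.card H : ℂ)) *
          ∑ Y : J, if h : ((Y * X * Y⁻¹ : J) : GL (Fin n) F) ∈ H
            then LinearMap.trace ℂ V (σ ⟨((Y * X * Y⁻¹ : J) : GL (Fin n) F), h⟩) else 0) *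
          Psi p F n (X : GL (Fin n) F)
    -- ... equals `W_H(σ)`:
    = W p F n H σ := by
  classical
  have hcJ0 : (Nat.card J : ℂ) ≠ 0 := by
    exact_mod_cast (Nat.card_pos (α := J)).ne'
  have hcH0 : (Nat.card H : ℂ) ≠ 0 := by
    exact_mod_cast (Nat.card_pos (α := H)).ne'
  set f : GL (Fin n) F → ℂ := fun g =>
    if h : g ∈ H then LinearMap.trace ℂ V (σ ⟨g, h⟩) * Psi p F n g else 0 with hf
  set S : ℂ := ∑ x : H, LinearMap.trace ℂ V (σ x) * Psi p F n (x : GL (Fin n) F) with hS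
  -- the sum of f over J equals S
  have hJS : (∑ Z : J, f (Z : GL (Fin n) F)) = S := by
    have h1 : (∑ Z : J, f (Z : GL (Fin n) F))
        = ∑ g ∈ Set.toFinset (J : Set (GL (Fin n) F)), f g :=
      (Finset.sum_subtype _ (by simp) f).symm
    have h2 : (∑ x : H, f (x : GL (Fin n) F))
        = ∑ g ∈ Set.toFinset (H : Set (GL (Fin n) F)), f g :=
      (Finset.sum_subtype _ (by simp) f).symm
    have hsub : Set.toFinset (H : Set (GL (Fin n) F)) ⊆ Set.toFinset (J : Set (GL (Fin n) F)) := by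
      intro g hg
      simp only [Set.mem_toFinset] at *
      exact hHJ hg
    have h3 : ∑ g ∈ Set.toFinset (H : Set (GL (Fin n) F)), f g
        = ∑ g ∈ Set.toFinset (J : Set (GL (Fin n) F)), f g := by
      refine Finset.sum_subset hsub ?_
      intro g _ hg
      simp only [Set.mem_toFinset] at hg
      have hg' : g ∉ H := by simpa using hg
      simp only [hf]
      exact dif_neg hg'
    rw [h1, ← h3, ← h2, hS]
    refine Finset.sum_congr rfl fun x _ => ?_
    simp [hf, x.2]
  -- each summand's inner dite times Psi equals f of the conjugate
  have hterm : ∀ X Y : J,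
      (if h : ((Y * X * Y⁻¹ : J) : GL (Fin n) F) ∈ H
        then LinearMap.trace ℂ V (σ ⟨((Y * X * Y⁻¹ : J) : GL (Fin n) F), h⟩) else 0) *
        Psi p F n (X : GL (Fin n) F)
      = f ((Y * X * Y⁻¹ : J) : GL (Fin n) F) := by
    intro X Y
    have hpsi : Psi p F n ((Y * X * Y⁻¹ : J) : GL (Fin n) F) = Psi p F n (X : GL (Fin n) F) := by
      have : ((Y * X * Y⁻¹ : J) : GL (Fin n) F)
          = (Y : GL (Fin n) F) * (X : GL (Fin n) F) * (Y : GL (Fin n) F)⁻¹ := by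
        push_cast; ring_nf
      rw [this, Psi_conj]
    simp only [hf]
    by_cases h : ((Y * X * Y⁻¹ : J) : GL (Fin n) F) ∈ H
    · rw [dif_pos h, dif_pos h, hpsi]
    · rw [dif_neg h, dif_neg h, zero_mul]
  -- conjugation reindexing
  have hconj : ∀ Y : J, (∑ X : J, f ((Y * X * Y⁻¹ : J) : GL (Fin n) F))
      = ∑ Z : J, f (Z : GL (Fin n) F) := by
    intro Y
    exact Fintype.sum_equiv (MulAut.conj Y).toEquiv _ _ (fun X => rfl)
  -- main computation
  clear_value f S
  have h4 : ∀ X : J,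
      ((1 / (Nat.card H : ℂ)) *
        ∑ Y : J, if h : ((Y * X * Y⁻¹ : J) : GL (Fin n) F) ∈ H
          then LinearMap.trace ℂ V (σ ⟨((Y * X * Y⁻¹ : J) : GL (Fin n) F), h⟩) else 0) *
        Psi p F n (X : GL (Fin n) F)
      = (1 / (Nat.card H : ℂ)) * ∑ Y : J, f ((Y * X * Y⁻¹ : J) : GL (Fin n) F) := by
    intro X
    rw [mul_assoc, Finset.sum_mul]
    congr 1
    exact Finset.sum_congr rfl fun Y _ => hterm X Y
  have h5 : (∑ X : J,
      ((1 / (Nat.card H : ℂ)) *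
        ∑ Y : J, if h : ((Y * X * Y⁻¹ : J) : GL (Fin n) F) ∈ H
          then LinearMap.trace ℂ V (σ ⟨((Y * X * Y⁻¹ : J) : GL (Fin n) F), h⟩) else 0) *
        Psi p F n (X : GL (Fin n) F))
      = (1 / (Nat.card H : ℂ)) * ((Nat.card J : ℂ) * S) := by
    rw [Finset.sum_congr rfl fun X _ => h4 X, ← Finset.mul_sum, Finset.sum_comm]
    congr 1
    rw [Finset.sum_congr rfl fun Y _ => (hconj Y).trans hJS, Finset.sum_const,
      Finset.card_univ, nsmul_eq_mul, Nat.card_eq_fintype_card]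
  rw [h5, W, ← hS]
  generalize (Nat.card J : ℂ) = A at hcJ0 ⊢
  generalize (Nat.card H : ℂ) = B at hcH0 ⊢
  generalize (Module.finrank ℂ V : ℂ) = D
  rcases eq_or_ne D 0 with h0 | h0
  · rw [h0, mul_zero, div_zero, zero_mul, zero_mul]
  · field_simp
end

section
/- Let μ be a partition of n and consider all partitions λ of n+1 whose diagram is obtained from [μ] by adding one node, at position (i(λ), j(λ)). Then Σ_λ dim(S^λ)·(i(λ) − j(λ)) = 0, where S^λ is the Specht module (equivalently, dim S^λ is the number of standard Young tableaux of shape λ). -/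
/- STATEMENT 11: Σ_λ dim(S^λ)·(i(λ) − j(λ)) = 0, the sum over all partitions λ of n+1
   obtained from μ by adding one node at position (i(λ), j(λ)); dim S^λ is the number
   of standard Young tableaux of shape λ. -/

/-- The number of standard Young tableaux of shape `ν`: bijective fillings of the
    diagram by `{1,…,n}` increasing along rows and down columns. -/
noncomputable def numSYT (ν : YoungDiagram) : ℕ :=
  Nat.card {e : ν.cells ≃ Fin ν.card //
    ∀ a b : ν.cells,
      (((a : ℕ × ℕ).1 = (b : ℕ × ℕ).1 ∧ (a : ℕ × ℕ).2 < (b : ℕ × ℕ).2) → e a < e b) ∧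
      (((a : ℕ × ℕ).2 = (b : ℕ × ℕ).2 ∧ (a : ℕ × ℕ).1 < (b : ℕ × ℕ).1) → e a < e b)}

/-! Write `f λ` for the number of standard tableaux of shape `λ` and
`S μ = ∑ c, f (μ + c) * (c.1 - c.2)` over the addable cells `c` of `μ`. Removing the largest entry
of a tableau gives the branching rule `f λ = ∑ d, f (λ - d)` over the corners `d` of `λ`. Apply it
to `λ = μ + c`: the term `d = c` gives `f μ`, and for `d ≠ c` adding `c` commutes with removing
`d`, so that `S μ = f μ * (∑ c, (c.1 - c.2) - ∑ d, (d.1 - d.2)) + ∑ d, S (μ - d)`. Both sums of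
`c.1 - c.2`, over the addable cells and over the corners, telescope along the row lengths to the
same value, so `S μ = 0` by induction on `|μ|`. -/

open Finset

section IncreasingLabeling

variable {β γ : Type*} (r : β → β → Prop) (n : ℕ)

def IncreasingLabeling : Type _ := {e : β ≃ Fin n // ∀ a b, r a b → e a < e b}

variable {r n}

def IncreasingLabeling.congr {r' : γ → γ → Prop} (σ : β ≃ γ)
    (hσ : ∀ a b, r' (σ a) (σ b) ↔ r a b) : IncreasingLabeling r n ≃ IncreasingLabeling r' n :=
  (σ.equivCongr (Equiv.refl _)).subtypeEquiv fun e =>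
    ⟨fun h a b hab => h _ _ (by rwa [← hσ, σ.apply_symm_apply, σ.apply_symm_apply]),
      fun h a b hab => by simpa using h (σ a) (σ b) ((hσ a b).2 hab)⟩

def Equiv.restrictOfSymmLast [DecidableEq β] (d : β) :
    {e : β ≃ Fin (n + 1) // e.symm (Fin.last n) = d} ≃ ({x // x ≠ d} ≃ Fin n) :=
  (((Equiv.optionSubtypeNe d).equivCongr (Equiv.refl _)).symm.subtypeEquiv fun e => by
      simp [Equiv.eq_symm_apply, eq_comm]).trans <|
    (Equiv.optionSubtype (Fin.last n)).trans
      ((Equiv.refl _).equivCongr (finSuccAboveEquiv (Fin.last n)).symm)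

theorem Equiv.restrictOfSymmLast_lt_iff [DecidableEq β] {d : β}
    (e : {e : β ≃ Fin (n + 1) // e.symm (Fin.last n) = d}) (x y : {x // x ≠ d}) :
    Equiv.restrictOfSymmLast d e x < Equiv.restrictOfSymmLast d e y ↔ e.1 x < e.1 y := by
  rw [← Fin.castSucc_lt_castSucc_iff]
  simp [Equiv.restrictOfSymmLast, finSuccAboveEquiv_symm_apply_last]

instance [Finite β] : Finite (IncreasingLabeling r n) := Subtype.finite

def IncreasingLabeling.fiberEquiv [DecidableEq β] {d : β} (hd : ∀ b, ¬ r d b) :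
    {e : IncreasingLabeling r (n + 1) // e.1.symm (Fin.last n) = d} ≃
      IncreasingLabeling (fun a b : {x // x ≠ d} => r a b) n :=
  ((Equiv.subtypeSubtypeEquivSubtypeInter _ _).trans <|
      (Equiv.subtypeEquivRight fun _ => and_comm).trans
        (Equiv.subtypeSubtypeEquivSubtypeInter _ _).symm).trans <|
    (Equiv.restrictOfSymmLast d).subtypeEquiv fun e => by
      simp only [Equiv.restrictOfSymmLast_lt_iff]
      refine ⟨fun h a b => h a b, fun h a b hab => ?_⟩
      have ha : a ≠ d := by rintro rfl; exact hd b hab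
      by_cases hb : b = d
      · subst hb
        have hed : e.1 b = Fin.last n := ((Equiv.symm_apply_eq _).1 e.2).symm
        rw [hed]
        exact Fin.lt_last_iff_ne_last.2 fun h => ha (e.1.injective (h.trans hed.symm))
      · exact h ⟨a, ha⟩ ⟨b, hb⟩ hab

theorem IncreasingLabeling.isEmpty_fiber {d b : β} (hdb : r d b) :
    IsEmpty {e : IncreasingLabeling r (n + 1) // e.1.symm (Fin.last n) = d} := by
  refine ⟨fun ⟨e, he⟩ => ?_⟩
  have := e.2 d b hdb
  rw [← he, Equiv.apply_symm_apply] at this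
  exact absurd this (not_lt.2 (Fin.le_last _))

end IncreasingLabeling

section FinsetLabeling

variable {α : Type*} [DecidableEq α] (r : α → α → Prop) (s : Finset α) (n : ℕ)

def Finset.subtypeNeEquivErase (d : s) : {x : s // x ≠ d} ≃ s.erase d where
  toFun x := ⟨x.1, Finset.mem_erase.2 ⟨fun h => x.2 (Subtype.ext h), x.1.2⟩⟩
  invFun x :=
    ⟨⟨x, Finset.mem_of_mem_erase x.2⟩, fun h => Finset.ne_of_mem_erase x.2 (congrArg Subtype.val h)⟩

open Classical in
theorem IncreasingLabeling.card_fiber (d : s) :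
    Nat.card {e : IncreasingLabeling (fun a b : s => r a b) (n + 1) // e.1.symm (Fin.last n) = d} =
      if ∀ b ∈ s, ¬ r d b then Nat.card (IncreasingLabeling (fun a b : s.erase d => r a b) n)
      else 0 := by
  split_ifs with hd
  · exact Nat.card_congr <|
      (IncreasingLabeling.fiberEquiv (r := fun a b : s => r a b) fun b => hd b.1 b.2).trans <|
        IncreasingLabeling.congr (s.subtypeNeEquivErase d) fun _ _ => Iff.rfl
  · push Not at hd
    obtain ⟨b, hb, hdb⟩ := hd
    have := IncreasingLabeling.isEmpty_fiber (r := fun a b : s => r a b) (n := n) (b := ⟨b, hb⟩) hdb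
    exact Nat.card_of_isEmpty

open Classical in
theorem IncreasingLabeling.card_succ :
    Nat.card (IncreasingLabeling (fun a b : s => r a b) (n + 1)) =
      ∑ d ∈ s with ∀ b ∈ s, ¬ r d b,
        Nat.card (IncreasingLabeling (fun a b : s.erase d => r a b) n) := by
  rw [← Nat.card_congr <|
      Equiv.sigmaFiberEquiv fun e : IncreasingLabeling _ _ => e.1.symm (Fin.last n),
    Nat.card_sigma, Finset.sum_filter, ← Finset.sum_coe_sort s]
  exact Fintype.sum_congr _ _ (IncreasingLabeling.card_fiber r s n)

end FinsetLabeling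

theorem IsLowerSet.insert_iff_minimal {α : Type*} [PartialOrder α] {s : Set α} (hs : IsLowerSet s)
    {a : α} (ha : a ∉ s) : IsLowerSet (insert a s) ↔ Minimal (· ∉ s) a := by
  rw [minimal_iff_forall_lt]
  refine ⟨fun h => ⟨ha, fun b hba hb => hb ?_⟩, fun ⟨_, hmin⟩ x y hyx hx => ?_⟩
  · exact (h hba.le (Set.mem_insert a s)).resolve_left hba.ne
  · rcases hx with rfl | hx
    · rcases hyx.lt_or_eq with hlt | rfl
      · exact Or.inr (not_not.1 (hmin hlt))
      · exact Set.mem_insert _ _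
    · exact Or.inr (hs hyx hx)

namespace YoungDiagram

variable {μ : YoungDiagram} {c d x : ℕ × ℕ}

/- The addable cells of `μ` are the minimal non-cells `Minimal (· ∉ μ)`, its corners the maximal
cells `Maximal (· ∈ μ)`. At any other cell `insertCell` and `eraseCell` return `μ` unchanged. -/
open Classical in
noncomputable def insertCell (μ : YoungDiagram) (c : ℕ × ℕ) : YoungDiagram :=
  if h : IsLowerSet (insert c μ.cells : Set (ℕ × ℕ)) then ⟨insert c μ.cells, by simpa using h⟩
  else μ

open Classical in
noncomputable def eraseCell (μ : YoungDiagram) (d : ℕ × ℕ) : YoungDiagram :=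
  if h : IsLowerSet (μ.cells \ {d} : Set (ℕ × ℕ)) then ⟨μ.cells.erase d, by simpa using h⟩
  else μ

theorem cells_insertCell (hc : Minimal (· ∉ μ) c) : (μ.insertCell c).cells = insert c μ.cells := by
  rw [insertCell, dif_pos ((μ.isLowerSet.insert_iff_minimal hc.prop).2 hc)]

theorem cells_eraseCell (hd : Maximal (· ∈ μ) d) : (μ.eraseCell d).cells = μ.cells.erase d := by
  rw [eraseCell, dif_pos (μ.isLowerSet.erase fun _ hb hdb => hd.eq_of_ge hb hdb)]

theorem card_insertCell (hc : Minimal (· ∉ μ) c) : (μ.insertCell c).card = μ.card + 1 := by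
  rw [YoungDiagram.card, cells_insertCell hc, card_insert_of_notMem hc.prop]

theorem card_eraseCell (hd : Maximal (· ∈ μ) d) : (μ.eraseCell d).card + 1 = μ.card := by
  rw [YoungDiagram.card, cells_eraseCell hd, card_erase_add_one hd.prop]

theorem mem_insertCell (hc : Minimal (· ∉ μ) c) : x ∈ μ.insertCell c ↔ x = c ∨ x ∈ μ := by
  rw [← mem_cells, cells_insertCell hc, Finset.mem_insert, mem_cells]

theorem mem_eraseCell (hd : Maximal (· ∈ μ) d) : x ∈ μ.eraseCell d ↔ x ≠ d ∧ x ∈ μ := by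
  rw [← mem_cells, cells_eraseCell hd, Finset.mem_erase, mem_cells]

theorem maximal_insertCell (hc : Minimal (· ∉ μ) c) : Maximal (· ∈ μ.insertCell c) c := by
  refine maximal_iff_forall_gt.2 ⟨(mem_insertCell hc).2 (Or.inl rfl), fun y hcy hy => ?_⟩
  rcases (mem_insertCell hc).1 hy with rfl | hy
  · exact hcy.ne rfl
  · exact hc.prop (μ.isLowerSet hcy.le hy)

theorem minimal_eraseCell (hd : Maximal (· ∈ μ) d) : Minimal (· ∉ μ.eraseCell d) d := by
  refine minimal_iff_forall_lt.2 ⟨fun h => ((mem_eraseCell hd).1 h).1 rfl, fun y hyd hy => hy ?_⟩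
  exact (mem_eraseCell hd).2 ⟨hyd.ne, μ.isLowerSet hyd.le hd.prop⟩

theorem eraseCell_insertCell (hc : Minimal (· ∉ μ) c) : (μ.insertCell c).eraseCell c = μ :=
  SetLike.ext fun x => by
    rw [mem_eraseCell (maximal_insertCell hc), mem_insertCell hc]
    constructor
    · rintro ⟨hxc, rfl | hx⟩
      exacts [absurd rfl hxc, hx]
    · exact fun hx => ⟨fun hxc => hc.prop (hxc ▸ hx), Or.inr hx⟩

theorem insertCell_eraseCell (hd : Maximal (· ∈ μ) d) : (μ.eraseCell d).insertCell d = μ :=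
  SetLike.ext fun x => by
    rw [mem_insertCell (minimal_eraseCell hd), mem_eraseCell hd]
    by_cases hxd : x = d
    · simp [hxd, hd.prop]
    · simp [hxd]

theorem minimal_maximal_insertCell_iff (hcd : c ≠ d) :
    Minimal (· ∉ μ) c ∧ Maximal (· ∈ μ.insertCell c) d ↔
      Maximal (· ∈ μ) d ∧ Minimal (· ∉ μ.eraseCell d) c := by
  constructor
  · rintro ⟨hc, hd'⟩
    simp only [maximal_iff_forall_gt, mem_insertCell hc] at hd'
    have hd : Maximal (· ∈ μ) d :=
      maximal_iff_forall_gt.2 ⟨hd'.1.resolve_left hcd.symm, fun y hdy hy => hd'.2 hdy (Or.inr hy)⟩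
    refine ⟨hd, minimal_iff_forall_lt.2 ⟨?_, fun y hyc hy => hy ?_⟩⟩
    · rw [mem_eraseCell hd]
      exact fun h => hc.prop h.2
    · refine (mem_eraseCell hd).2 ⟨?_, not_not.1 ((minimal_iff_forall_lt.1 hc).2 hyc)⟩
      rintro rfl
      exact hd'.2 hyc (Or.inl rfl)
  · rintro ⟨hd, hc'⟩
    have below (y) (hyc : y < c) : y ≠ d ∧ y ∈ μ :=
      (mem_eraseCell hd).1 (not_not.1 ((minimal_iff_forall_lt.1 hc').2 hyc))
    have hc : Minimal (· ∉ μ) c := minimal_iff_forall_lt.2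
      ⟨fun h => hc'.prop ((mem_eraseCell hd).2 ⟨hcd, h⟩), fun y hyc hy => hy (below y hyc).2⟩
    refine ⟨hc, maximal_iff_forall_gt.2
      ⟨(mem_insertCell hc).2 (Or.inr hd.prop), fun y hdy hy => ?_⟩⟩
    rcases (mem_insertCell hc).1 hy with rfl | hy
    · exact (below d hdy).1 rfl
    · exact (maximal_iff_forall_gt.1 hd).2 hdy hy

theorem eraseCell_insertCell_comm (hcd : c ≠ d) (hc : Minimal (· ∉ μ) c)
    (hd : Maximal (· ∈ μ.insertCell c) d) :
    (μ.insertCell c).eraseCell d = (μ.eraseCell d).insertCell c := by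
  obtain ⟨hd', hc'⟩ := (minimal_maximal_insertCell_iff hcd).1 ⟨hc, hd⟩
  refine SetLike.ext fun x => ?_
  rw [mem_eraseCell hd, mem_insertCell hc, mem_insertCell hc', mem_eraseCell hd']
  by_cases hxc : x = c
  · simp [hxc, hcd]
  · simp [hxc]

theorem minimal_notMem_iff {i j : ℕ} :
    Minimal (· ∉ μ) (i, j) ↔ j = μ.rowLen i ∧ (i = 0 ∨ μ.rowLen i < μ.rowLen (i - 1)) := by
  simp only [minimal_iff_forall_lt, not_not, Prod.forall, Prod.mk_lt_mk, mem_iff_lt_rowLen,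
    not_lt]
  constructor
  · rintro ⟨hij, hlt⟩
    have hrow : j = 0 ∨ j - 1 < μ.rowLen i := by
      rcases Nat.eq_zero_or_pos j with hj | hj
      · exact Or.inl hj
      · exact Or.inr (hlt i (j - 1) (Or.inr ⟨le_rfl, by omega⟩))
    have hcol : i = 0 ∨ j < μ.rowLen (i - 1) := by
      rcases Nat.eq_zero_or_pos i with hi | hi
      · exact Or.inl hi
      · exact Or.inr (hlt (i - 1) j (Or.inl ⟨by omega, le_rfl⟩))
    omega
  · rintro ⟨rfl, hi⟩
    refine ⟨le_rfl, fun a b hab => ?_⟩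
    have h1 := μ.rowLen_anti a i (by omega)
    rcases hab with ⟨ha, hb⟩ | ⟨ha, hb⟩
    · have h2 := μ.rowLen_anti a (i - 1) (by omega)
      omega
    · omega

theorem maximal_mem_iff {i j : ℕ} :
    Maximal (· ∈ μ) (i, j) ↔ (i, j) ∈ μ ∧ (i + 1, j) ∉ μ ∧ (i, j + 1) ∉ μ := by
  rw [maximal_iff_forall_gt]
  refine ⟨fun ⟨hij, hgt⟩ => ⟨hij, hgt (by simp [Prod.lt_iff]), hgt (by simp [Prod.lt_iff])⟩,
    fun ⟨hij, hbelow, hright⟩ => ⟨hij, fun y hy hyμ => ?_⟩⟩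
  rcases Prod.lt_iff.1 hy with ⟨h1, h2⟩ | ⟨h1, h2⟩
  · exact hbelow (μ.up_left_mem h1 h2 hyμ)
  · exact hright (μ.up_left_mem h1 h2 hyμ)

theorem maximal_mem_iff_rowLen {i j : ℕ} :
    Maximal (· ∈ μ) (i, j) ↔ j + 1 = μ.rowLen i ∧ μ.rowLen (i + 1) < μ.rowLen i := by
  simp only [maximal_mem_iff, mem_iff_lt_rowLen]
  have := μ.rowLen_anti i (i + 1) (by omega)
  omega

theorem rowLen_pos_iff {i : ℕ} : 0 < μ.rowLen i ↔ i < μ.colLen 0 := by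
  rw [← mem_iff_lt_rowLen, mem_iff_lt_colLen]

noncomputable def addables (μ : YoungDiagram) : Finset (ℕ × ℕ) :=
  {i ∈ range (μ.colLen 0 + 1) | i = 0 ∨ μ.rowLen i < μ.rowLen (i - 1)}.image
    fun i => (i, μ.rowLen i)

noncomputable def corners (μ : YoungDiagram) : Finset (ℕ × ℕ) :=
  {i ∈ range (μ.colLen 0) | μ.rowLen (i + 1) < μ.rowLen i}.image fun i => (i, μ.rowLen i - 1)

theorem mem_addables : c ∈ μ.addables ↔ Minimal (· ∉ μ) c := by
  obtain ⟨i, j⟩ := c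
  simp only [addables, mem_image, mem_filter, mem_range, Prod.mk.injEq, minimal_notMem_iff]
  constructor
  · rintro ⟨i, ⟨-, hi⟩, rfl, rfl⟩
    exact ⟨rfl, hi⟩
  · rintro ⟨rfl, hi⟩
    refine ⟨i, ⟨?_, hi⟩, rfl, rfl⟩
    have := rowLen_pos_iff (μ := μ) (i := i - 1)
    omega

theorem mem_corners : d ∈ μ.corners ↔ Maximal (· ∈ μ) d := by
  obtain ⟨i, j⟩ := d
  simp only [corners, mem_image, mem_filter, mem_range, Prod.mk.injEq, maximal_mem_iff_rowLen]
  have := rowLen_pos_iff (μ := μ) (i := i)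
  constructor
  · rintro ⟨i, ⟨-, hi⟩, rfl, rfl⟩
    omega
  · rintro ⟨hj, hi⟩
    exact ⟨i, ⟨by omega, hi⟩, rfl, by omega⟩

theorem sum_addables_eq_sum_corners (μ : YoungDiagram) :
    ∑ c ∈ μ.addables, ((c.1 : ℤ) - c.2) = ∑ d ∈ μ.corners, ((d.1 : ℤ) - d.2) := by
  have hinj {f : ℕ → ℕ} {s : Finset ℕ} : Set.InjOn (fun i => (i, f i)) s :=
    fun _ _ _ _ h => (Prod.ext_iff.1 h).1
  rw [addables, corners, sum_image hinj, sum_image hinj, sum_filter, sum_filter, sum_range_succ']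
  set N := μ.colLen 0
  have hN : μ.rowLen N = 0 := by
    have := rowLen_pos_iff (μ := μ) (i := N)
    omega
  -- Row `i + 1` has an addable cell iff row `i` has a corner; the two terms differ by
  -- `rowLen (i + 1) - rowLen i`, which telescopes.
  have hterm : ∀ i ∈ range N,
      (if μ.rowLen (i + 1) < μ.rowLen i then ((i : ℤ) - ↑(μ.rowLen i - 1)) else 0) =
        (if i + 1 = 0 ∨ μ.rowLen (i + 1) < μ.rowLen (i + 1 - 1) then
          ((i + 1 : ℕ) : ℤ) - μ.rowLen (i + 1) else 0) +
          ((μ.rowLen (i + 1) : ℤ) - μ.rowLen i) := by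
    intro i _
    have := μ.rowLen_anti i (i + 1) (by omega)
    simp only [Nat.add_sub_cancel, Nat.add_one_ne_zero, false_or]
    split_ifs <;> omega
  rw [sum_congr rfl hterm, sum_add_distrib, sum_range_sub (fun i => (μ.rowLen i : ℤ)), hN]
  simp

def SameRowOrColLT (a b : ℕ × ℕ) : Prop :=
  (a.1 = b.1 ∧ a.2 < b.2) ∨ (a.2 = b.2 ∧ a.1 < b.1)

theorem maximal_mem_iff_forall_not_sameRowOrColLT :
    Maximal (· ∈ μ) d ↔ d ∈ μ ∧ ∀ b ∈ μ, ¬ SameRowOrColLT d b := by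
  obtain ⟨i, j⟩ := d
  rw [maximal_mem_iff]
  refine ⟨fun ⟨hij, hbelow, hright⟩ => ⟨hij, fun b hb hdb => ?_⟩,
    fun ⟨hij, h⟩ => ⟨hij, fun hb => h _ hb (by simp [SameRowOrColLT]),
      fun hb => h _ hb (by simp [SameRowOrColLT])⟩⟩
  rcases hdb with ⟨h1, h2⟩ | ⟨h2, h1⟩
  · exact hright (μ.up_left_mem h1.le h2 hb)
  · exact hbelow (μ.up_left_mem h1 h2.le hb)

theorem numSYT_eq_card (ν : YoungDiagram) :
    numSYT ν =
      Nat.card (IncreasingLabeling (fun a b : ν.cells => SameRowOrColLT a b) ν.cells.card) :=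
  Nat.card_congr <| Equiv.subtypeEquivRight fun e => by simp only [SameRowOrColLT, or_imp]

theorem numSYT_eq_sum_corners (ν : YoungDiagram) (hν : ν.card ≠ 0) :
    numSYT ν = ∑ d ∈ ν.corners, numSYT (ν.eraseCell d) := by
  obtain ⟨n, hn⟩ : ∃ n, ν.cells.card = n + 1 := Nat.exists_eq_add_one_of_ne_zero hν
  rw [numSYT_eq_card, hn, IncreasingLabeling.card_succ]
  refine sum_congr (ext fun d => ?_) fun d hd => ?_
  · simp [mem_corners, maximal_mem_iff_forall_not_sameRowOrColLT]
  · have hd := mem_corners.1 hd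
    rw [numSYT_eq_card, cells_eraseCell hd, card_erase_of_mem hd.prop, hn, Nat.add_sub_cancel]

theorem numSYT_insertCell (hc : Minimal (· ∉ μ) c) :
    numSYT (μ.insertCell c) =
      numSYT μ +
        ∑ d ∈ (μ.insertCell c).corners.erase c, numSYT ((μ.insertCell c).eraseCell d) := by
  rw [numSYT_eq_sum_corners _ (by simp [card_insertCell hc]),
    ← add_sum_erase _ _ (mem_corners.2 (maximal_insertCell hc)), eraseCell_insertCell hc]

theorem sum_addables_sum_corners_erase {M : Type*} [AddCommMonoid M] (μ : YoungDiagram)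
    (F : ℕ × ℕ → YoungDiagram → M) :
    ∑ c ∈ μ.addables, ∑ d ∈ (μ.insertCell c).corners.erase c,
        F c ((μ.insertCell c).eraseCell d) =
      ∑ d ∈ μ.corners, ∑ c ∈ (μ.eraseCell d).addables.erase d,
        F c ((μ.eraseCell d).insertCell c) := by
  refine (sum_congr rfl fun c hc => sum_congr rfl fun d hd => ?_).trans (sum_comm' fun c d => ?_)
  · obtain ⟨hdc, hd⟩ := mem_erase.1 hd
    rw [eraseCell_insertCell_comm (Ne.symm hdc) (mem_addables.1 hc) (mem_corners.1 hd)]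
  · simp only [mem_erase, mem_addables, mem_corners]
    by_cases hcd : c = d
    · simp [hcd]
    · simp only [Ne, hcd, Ne.symm hcd, not_false_eq_true, true_and]
      rw [minimal_maximal_insertCell_iff hcd, and_comm]

theorem sum_addables_numSYT_mul_eq_zero (μ : YoungDiagram) :
    ∑ c ∈ μ.addables, (numSYT (μ.insertCell c) : ℤ) * ((c.1 : ℤ) - c.2) = 0 := by
  induction hμ : μ.card using Nat.strong_induction_on generalizing μ with
  | _ n ih =>
  have hcorner (d) (hd : d ∈ μ.corners) :
      ∑ c ∈ (μ.eraseCell d).addables.erase d,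
        (numSYT ((μ.eraseCell d).insertCell c) : ℤ) * ((c.1 : ℤ) - c.2) =
          -(numSYT μ * ((d.1 : ℤ) - d.2)) := by
    have hd := mem_corners.1 hd
    rw [sum_erase_eq_sub (mem_addables.2 (minimal_eraseCell hd)),
      ih _ (by have := card_eraseCell hd; omega) _ rfl, insertCell_eraseCell hd, zero_sub]
  calc ∑ c ∈ μ.addables, (numSYT (μ.insertCell c) : ℤ) * ((c.1 : ℤ) - c.2)
      = numSYT μ * ∑ c ∈ μ.addables, ((c.1 : ℤ) - c.2) +
          ∑ c ∈ μ.addables, ∑ d ∈ (μ.insertCell c).corners.erase c,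
            (numSYT ((μ.insertCell c).eraseCell d) : ℤ) * ((c.1 : ℤ) - c.2) := by
        rw [mul_sum, ← sum_add_distrib]
        refine sum_congr rfl fun c hc => ?_
        rw [numSYT_insertCell (mem_addables.1 hc), Nat.cast_add, Nat.cast_sum, add_mul, sum_mul]
    _ = numSYT μ * ∑ d ∈ μ.corners, ((d.1 : ℤ) - d.2) +
          ∑ d ∈ μ.corners, -(numSYT μ * ((d.1 : ℤ) - d.2)) := by
        rw [sum_addables_eq_sum_corners,
          sum_addables_sum_corners_erase μ fun c ν => (numSYT ν : ℤ) * ((c.1 : ℤ) - c.2),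
          sum_congr rfl hcorner]
    _ = 0 := by rw [sum_neg_distrib, mul_sum, add_neg_cancel]

end YoungDiagram

theorem stmt11 (μ : YoungDiagram) (A : Finset (ℕ × ℕ))
    -- `A` is the set of addable nodes of the diagram of `μ`:
    (hA : ∀ c : ℕ × ℕ, c ∈ A ↔ c ∉ μ.cells ∧ ∃ ν : YoungDiagram, ν.cells = insert c μ.cells)
    -- `g c` is the Young diagram obtained by adding the node `c`:
    (g : ℕ × ℕ → YoungDiagram) (hg : ∀ c ∈ A, (g c).cells = insert c μ.cells) :
    -- Σ_λ dim(S^λ)·(i(λ) − j(λ)) = 0  (with (i,j) the 1-indexed position of the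
    -- added node, so i − j = (c.1+1) − (c.2+1) = c.1 − c.2):
    ∑ c ∈ A, (numSYT (g c) : ℤ) * ((c.1 : ℤ) - (c.2 : ℤ)) = 0 := by
  have hA' : A = μ.addables := by
    ext c
    rw [hA, YoungDiagram.mem_addables]
    refine ⟨fun ⟨hc, ν, hν⟩ => (μ.isLowerSet.insert_iff_minimal hc).1 ?_,
      fun hc => ⟨hc.prop, μ.insertCell c, YoungDiagram.cells_insertCell hc⟩⟩
    rw [← Finset.coe_insert, ← hν]
    exact ν.isLowerSet
  have hg' (c) (hc : c ∈ A) : g c = μ.insertCell c :=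
    YoungDiagram.ext ((hg c hc).trans
      (YoungDiagram.cells_insertCell (YoungDiagram.mem_addables.1 (hA' ▸ hc))).symm)
  rw [sum_congr rfl fun c hc => by rw [hg' c hc], hA']
  exact μ.sum_addables_numSYT_mul_eq_zero
end

section
/- Let λ and μ be partitions of n, t₁ a λ-tableau and t₂ a μ-tableau (bijective fillings of the respective Young diagrams with {1,…,n}). Suppose that for each i, the entries of the i-th row of t₂ lie in distinct columns of t₁. Then λ dominates μ, i.e., for every j, Σ_{i=1}^{j} λᵢ ≥ Σ_{i=1}^{j} μᵢ. -/
/-!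
Send each cell of `μ` to the cell of `λ` carrying the same entry. Fix `j` and a column `c` of
`λ`. The cells of `μ` in rows `< j` landing in column `c` lie in distinct rows of `μ`, so there
are at most `j` of them, and they land injectively in column `c`, so there are at most
`λ.colLen c` of them. Hence there are at most `min j (λ.colLen c)`, which is exactly the number of
cells of `λ` in column `c` and rows `< j`. Summing over the columns `c` gives the inequality.
-/

open Finset

theorem Finset.card_filter_univ_coe {α : Type*} (s : Finset α) (p : α → Prop) [DecidablePred p] :
    #{x : s | p x} = #{x ∈ s | p x} := by
  rw [← card_map (Function.Embedding.subtype _)]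
  congr 1
  ext x
  simp [and_comm]

namespace YoungDiagram

theorem card_filter_fst_lt (μ : YoungDiagram) (j : ℕ) :
    #{c ∈ μ.cells | c.1 < j} = ∑ i ∈ range j, μ.rowLen i := by
  rw [card_eq_sum_card_fiberwise (f := Prod.fst) (t := range j) (fun c hc => by simp_all)]
  refine sum_congr rfl fun i hi => ?_
  rw [rowLen_eq_card]
  congr 1
  ext c
  simp only [mem_filter, mem_row_iff, mem_cells, mem_range] at hi ⊢
  constructor
  · rintro ⟨⟨hc, -⟩, rfl⟩; exact ⟨hc, rfl⟩
  · rintro ⟨hc, rfl⟩; exact ⟨⟨hc, hi⟩, rfl⟩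

theorem card_col_filter_fst_lt (μ : YoungDiagram) (i j : ℕ) :
    #{c ∈ μ.col j | c.1 < i} = min i (μ.colLen j) := by
  rw [col_eq_prod, filter_product_left (· < i), card_product, card_singleton, mul_one,
    ← card_range (min i _)]
  congr 1
  ext k
  simp [and_comm]

theorem sum_rowLen_le_of_injective {μ ν : YoungDiagram} (f : μ.cells → ν.cells)
    (hf : Function.Injective f)
    (hrow : ∀ a b : μ.cells, a.1.1 = b.1.1 → (f a).1.2 = (f b).1.2 → a = b) (j : ℕ) :
    ∑ i ∈ range j, μ.rowLen i ≤ ∑ i ∈ range j, ν.rowLen i := by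
  set cols := ν.cells.image Prod.snd
  rw [← card_filter_fst_lt, ← card_filter_fst_lt, ← card_filter_univ_coe,
    card_eq_sum_card_fiberwise (f := fun a => (f a).1.2) (t := cols)
      (fun a _ => mem_image_of_mem _ (f a).2),
    card_eq_sum_card_fiberwise (f := Prod.snd) (t := cols)
      (fun e he => mem_image_of_mem _ (mem_filter.1 he).1)]
  refine sum_le_sum fun c _ => ?_
  have hfibre : #{e ∈ {e ∈ ν.cells | e.1 < j} | e.2 = c} = min j (ν.colLen c) := by
    rw [← card_col_filter_fst_lt]
    congr 1
    ext e
    simp only [mem_filter, mem_col_iff, mem_cells]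
    tauto
  rw [hfibre, le_min_iff]
  constructor
  · refine (card_le_card_of_injOn (t := range j) (fun a : μ.cells => a.1.1)
      (fun a ha => ?_) (fun a ha b hb hab => ?_)).trans_eq (card_range j)
    · simp_all
    · simp only [coe_filter, Set.mem_ofPred_eq] at ha hb
      exact hrow a b hab (ha.2.trans hb.2.symm)
  · rw [colLen_eq_card]
    refine card_le_card_of_injOn (fun a => (f a).1) (fun a ha => ?_)
      (fun a _ b _ hab => hf (Subtype.ext hab))
    simp only [coe_filter, Set.mem_ofPred_eq] at ha
    simp [mem_col_iff, ha.2]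

end YoungDiagram

theorem stmt19_general (n : ℕ) (lam mu : YoungDiagram)
    -- a λ-tableau and a μ-tableau (bijective fillings by {1,…,n}):
    (t₁ : lam.cells ≃ Fin n) (t₂ : mu.cells ≃ Fin n)
    -- entries of each row of t₂ lie in distinct columns of t₁:
    (h : ∀ a b : mu.cells, (a : ℕ × ℕ).1 = (b : ℕ × ℕ).1 → a ≠ b →
      ((t₁.symm (t₂ a)) : ℕ × ℕ).2 ≠ ((t₁.symm (t₂ b)) : ℕ × ℕ).2) :
    -- λ ⊵ μ:
    ∀ j : ℕ, ∑ i ∈ Finset.range j, mu.rowLen i ≤ ∑ i ∈ Finset.range j, lam.rowLen i :=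
  YoungDiagram.sum_rowLen_le_of_injective (t₁.symm ∘ t₂) (t₁.symm.injective.comp t₂.injective)
    fun a b hrow hcol => by_contra fun hne => h a b hrow hne hcol

theorem stmt19 (n : ℕ) (lam mu : YoungDiagram) (hlam : lam.card = n) (hmu : mu.card = n)
    -- a λ-tableau and a μ-tableau (bijective fillings by {1,…,n}):
    (t₁ : lam.cells ≃ Fin n) (t₂ : mu.cells ≃ Fin n)
    -- entries of each row of t₂ lie in distinct columns of t₁:
    (h : ∀ a b : mu.cells, (a : ℕ × ℕ).1 = (b : ℕ × ℕ).1 → a ≠ b →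
      ((t₁.symm (t₂ a)) : ℕ × ℕ).2 ≠ ((t₁.symm (t₂ b)) : ℕ × ℕ).2) :
    -- λ ⊵ μ:
    ∀ j : ℕ, ∑ i ∈ Finset.range j, mu.rowLen i ≤ ∑ i ∈ Finset.range j, lam.rowLen i :=
  stmt19_general n lam mu t₁ t₂ h
end
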